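/- Let p and q be coprime positive integers. Identify ℂ¹² with ℂ⁶ × ℂ⁶. Then the set A' × A' ⊆ ℂ¹² has exactly four irreducible components, namely the four products A'_i × A'_j for i, j ∈ {r, c}. Precisely: (i) A' × A' = (A'_r × A'_r) ∪ (A'_r × A'_c) ∪ (A'_c × A'_r) ∪ (A'_c × A'_c); (ii) for each i, j ∈ {r, c}, the vanishing ideal of A'_i × A'_j in the polynomial ring in 12 variables over ℂ is a prime ideal; (iii) no one of these four product sets is contained in another. -/

import Mathlib

/-- `A' = {x ∈ ℂ⁶ : p·x₄·x₂ − q·x₁·x₅ = 0 and p·x₄·x₃ − q·x₁·x₆ = 0}`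
(coordinates `x₁,…,x₆` are `x 0, …, x 5`). -/
def setA' (p q : ℕ) : Set (Fin 6 → ℂ) :=
  {x | (p : ℂ) * x 3 * x 1 - (q : ℂ) * x 0 * x 4 = 0 ∧
       (p : ℂ) * x 3 * x 2 - (q : ℂ) * x 0 * x 5 = 0}

/-- `A'_r = {x ∈ ℂ⁶ : x₁ = 0 and x₄ = 0}`. -/
def setA'r : Set (Fin 6 → ℂ) := {x | x 0 = 0 ∧ x 3 = 0}

/-- `A'_c = {x ∈ ℂ⁶ : p·x₄·x₂ − q·x₁·x₅ = 0, p·x₄·x₃ − q·x₁·x₆ = 0, x₂·x₆ − x₃·x₅ = 0}`. -/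
def setA'c (p q : ℕ) : Set (Fin 6 → ℂ) :=
  {x | (p : ℂ) * x 3 * x 1 - (q : ℂ) * x 0 * x 4 = 0 ∧
       (p : ℂ) * x 3 * x 2 - (q : ℂ) * x 0 * x 5 = 0 ∧
       x 1 * x 5 - x 2 * x 4 = 0}

/-- The product `S × T ⊆ ℂ¹²` of two subsets `S, T ⊆ ℂ⁶`, under the identification
`ℂ¹² = ℂ⁶ × ℂ⁶` by the first six and last six coordinates. -/
def prodSet (S T : Set (Fin 6 → ℂ)) : Set (Fin 12 → ℂ) :=
  {x | (fun i : Fin 6 => x ⟨i.val, by have := i.isLt; omega⟩) ∈ S ∧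
       (fun i : Fin 6 => x ⟨i.val + 6, by have := i.isLt; omega⟩) ∈ T}

/-!
Multiplying the minor `x₂x₆ − x₃x₅` by `q x₁` or by `p x₄` gives a combination of the two
equations of `A'`, so off `A'_r` the minor vanishes and `A' = A'_r ∪ A'_c`. Both pieces are images
of polynomial maps, hence so are the four products; over an infinite field the vanishing ideal of
the image of `Φ` is the kernel of the substitution `bind₁ Φ` into a polynomial ring, hence prime.
Non-containment of the products reduces to `A'_r ⊄ A'_c ⊄ A'_r`.
-/

open MvPolynomial

section PolynomialImage

variable {K : Type*} [Field K] {ι σ : Type*}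

def polyImage (Φ : ι → MvPolynomial σ K) : Set (ι → K) :=
  Set.range fun a i => eval a (Φ i)

theorem vanishingIdeal_polyImage [Infinite K] (Φ : ι → MvPolynomial σ K) :
    vanishingIdeal K (polyImage Φ) = RingHom.ker (bind₁ Φ) := by
  ext f
  simp only [mem_vanishingIdeal_iff, polyImage, Set.forall_mem_range, RingHom.mem_ker,
    MvPolynomial.funext_iff, map_zero]
  exact forall_congr' fun x => Iff.of_eq (congrArg (· = 0) (aeval_bind₁ x Φ f).symm)

theorem isPrime_vanishingIdeal_polyImage [Infinite K] (Φ : ι → MvPolynomial σ K) :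
    (vanishingIdeal K (polyImage Φ)).IsPrime := by
  rw [vanishingIdeal_polyImage]
  exact RingHom.ker_isPrime _

end PolynomialImage

section ProdSet

variable {S T U V : Set (Fin 6 → ℂ)} {σ τ : Type*}

theorem mem_prodSet_iff {x : Fin (6 + 6) → ℂ} :
    x ∈ prodSet S T ↔ (fun i => x (Fin.castAdd 6 i)) ∈ S ∧ (fun i => x (Fin.natAdd 6 i)) ∈ T := by
  have hsnd : (fun i : Fin 6 => x (Fin.natAdd 6 i)) = fun i => x ⟨i.val + 6, by omega⟩ := by
    funext i; congr 1; ext; simp only [Fin.natAdd]; omega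
  rw [hsnd]; rfl

theorem append_mem_prodSet_iff {a b : Fin 6 → ℂ} :
    Fin.append a b ∈ prodSet S T ↔ a ∈ S ∧ b ∈ T := by
  simp only [mem_prodSet_iff, Fin.append_left, Fin.append_right]

theorem prodSet_union_left : prodSet (S ∪ T) U = prodSet S U ∪ prodSet T U := by
  ext x; simp only [mem_prodSet_iff, Set.mem_union]; tauto

theorem prodSet_union_right : prodSet S (T ∪ U) = prodSet S T ∪ prodSet S U := by
  ext x; simp only [mem_prodSet_iff, Set.mem_union]; tauto

theorem prodSet_subset_prodSet_iff (hS : S.Nonempty) (hT : T.Nonempty) :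
    prodSet S T ⊆ prodSet U V ↔ S ⊆ U ∧ T ⊆ V := by
  obtain ⟨a, ha⟩ := hS
  obtain ⟨b, hb⟩ := hT
  refine ⟨fun h => ⟨fun a' ha' => ?_, fun b' hb' => ?_⟩, fun ⟨hSU, hTV⟩ x hx => ?_⟩
  · exact (append_mem_prodSet_iff.mp (h (append_mem_prodSet_iff.mpr ⟨ha', hb⟩))).1
  · exact (append_mem_prodSet_iff.mp (h (append_mem_prodSet_iff.mpr ⟨ha, hb'⟩))).2
  · rw [mem_prodSet_iff] at hx ⊢
    exact ⟨hSU hx.1, hTV hx.2⟩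

theorem prodSet_polyImage (Φ : Fin 6 → MvPolynomial σ ℂ)
    (Ψ : Fin 6 → MvPolynomial τ ℂ) :
    prodSet (polyImage Φ) (polyImage Ψ) =
      polyImage (Fin.append (rename Sum.inl ∘ Φ) (rename Sum.inr ∘ Ψ)) := by
  ext x
  rw [mem_prodSet_iff]
  constructor
  · rintro ⟨⟨a, ha⟩, ⟨b, hb⟩⟩
    refine ⟨Sum.elim a b, ?_⟩
    funext i
    refine Fin.addCases (m := 6) (n := 6) (fun i => ?_) (fun i => ?_) i
    · simpa only [Fin.append_left, Function.comp_apply, eval_rename, Sum.elim_comp_inl]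
        using congrFun ha i
    · simpa only [Fin.append_right, Function.comp_apply, eval_rename, Sum.elim_comp_inr]
        using congrFun hb i
  · rintro ⟨c, rfl⟩
    exact ⟨⟨c ∘ Sum.inl, by simp only [Fin.append_left, Function.comp_apply, eval_rename]⟩,
      ⟨c ∘ Sum.inr, by simp only [Fin.append_right, Function.comp_apply, eval_rename]⟩⟩

theorem isPrime_vanishingIdeal_prodSet_polyImage (Φ : Fin 6 → MvPolynomial σ ℂ)
    (Ψ : Fin 6 → MvPolynomial τ ℂ) :
    (vanishingIdeal ℂ (prodSet (polyImage Φ) (polyImage Ψ))).IsPrime := by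
  rw [prodSet_polyImage]
  exact isPrime_vanishingIdeal_polyImage _

end ProdSet

section Components

variable {p q : ℕ}

theorem setA'_eq_setA'r_union_setA'c (hp : (p : ℂ) ≠ 0) (hq : (q : ℂ) ≠ 0) :
    setA' p q = setA'r ∪ setA'c p q := by
  ext x
  simp only [setA', setA'r, setA'c, Set.mem_union, Set.mem_ofPred_eq]
  constructor
  · rintro ⟨h1, h2⟩
    by_cases hx : x 0 = 0 ∧ x 3 = 0
    · exact .inl hx
    refine .inr ⟨h1, h2, ?_⟩
    have e0 : (q * x 0) * (x 1 * x 5 - x 2 * x 4) = 0 := by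
      linear_combination x 2 * h1 - x 1 * h2
    have e3 : (p * x 3) * (x 1 * x 5 - x 2 * x 4) = 0 := by
      linear_combination x 5 * h1 - x 4 * h2
    by_contra hm
    exact hx ⟨by simpa [hq, hm] using e0, by simpa [hp, hm] using e3⟩
  · rintro (⟨h0, h3⟩ | ⟨h1, h2, -⟩)
    · simp [h0, h3]
    · exact ⟨h1, h2⟩

noncomputable def setA'rParam : Fin 6 → MvPolynomial (Fin 4) ℂ :=
  ![0, X 0, X 1, 0, X 2, X 3]

theorem setA'r_eq_polyImage : setA'r = polyImage setA'rParam := by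
  ext x
  constructor
  · rintro ⟨h0, h3⟩
    refine ⟨![x 1, x 2, x 4, x 5], ?_⟩
    funext i
    fin_cases i <;> simp [setA'rParam, h0, h3]
  · rintro ⟨a, rfl⟩
    exact ⟨by simp [setA'rParam], by simp [setA'rParam]⟩

/-- `(a, b, u, v, t) ↦ (p t u, a u, b u, q t v, a v, b v)`: the last equation of `A'_c` says that
`(x₂, x₃)` and `(x₅, x₆)` are proportional. -/
noncomputable def setA'cParam (p q : ℕ) : Fin 6 → MvPolynomial (Fin 5) ℂ :=
  ![C (p : ℂ) * X 4 * X 2, X 0 * X 2, X 1 * X 2, C (q : ℂ) * X 4 * X 3, X 0 * X 3, X 1 * X 3]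

theorem exists_param_of_mem_setA'c (hp : (p : ℂ) ≠ 0) (hq : (q : ℂ) ≠ 0) {x : Fin 6 → ℂ}
    (hx : x ∈ setA'c p q) :
    ∃ a b u v t : ℂ, x 0 = p * t * u ∧ x 1 = a * u ∧ x 2 = b * u ∧
      x 3 = q * t * v ∧ x 4 = a * v ∧ x 5 = b * v := by
  obtain ⟨h1, h2, h3⟩ := hx
  rcases ne_or_eq (x 1) 0 with hx1 | hx1
  · refine ⟨x 1, x 2, 1, x 4 / x 1, x 0 / p, by field_simp, by ring, by ring,
      by field_simp; linear_combination h1, by field_simp, by field_simp; linear_combination h3⟩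
  rcases ne_or_eq (x 2) 0 with hx2 | hx2
  · refine ⟨x 1, x 2, 1, x 5 / x 2, x 0 / p, by field_simp, by ring, by ring,
      by field_simp; linear_combination h2, by field_simp; linear_combination -h3, by field_simp⟩
  by_cases hx0 : x 0 = 0
  · exact ⟨x 4, x 5, 0, 1, x 3 / q, by simp [hx0], by simp [hx1], by simp [hx2],
      by field_simp, by ring, by ring⟩
  have hx4 : x 4 = 0 := by simpa [hx1, hq, hx0] using h1
  have hx5 : x 5 = 0 := by simpa [hx2, hq, hx0] using h2
  exact ⟨0, 0, x 0 / p, x 3 / q, 1, by field_simp, by simp [hx1], by simp [hx2],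
    by field_simp, by simp [hx4], by simp [hx5]⟩

theorem setA'c_eq_polyImage (hp : (p : ℂ) ≠ 0) (hq : (q : ℂ) ≠ 0) :
    setA'c p q = polyImage (setA'cParam p q) := by
  ext x
  constructor
  · intro hx
    obtain ⟨a, b, u, v, t, h0, h1, h2, h3, h4, h5⟩ := exists_param_of_mem_setA'c hp hq hx
    refine ⟨![a, b, u, v, t], ?_⟩
    funext i
    fin_cases i <;> simp [setA'cParam, h0, h1, h2, h3, h4, h5]
  · rintro ⟨a, rfl⟩
    refine ⟨?_, ?_, ?_⟩ <;> simp [setA'cParam] <;> ring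

theorem setA'r_nonempty : setA'r.Nonempty := ⟨0, rfl, rfl⟩

theorem setA'c_nonempty : (setA'c p q).Nonempty := ⟨0, by simp [setA'c]⟩

theorem not_setA'r_subset_setA'c : ¬ setA'r ⊆ setA'c p q := fun h => by
  simpa using (h (show ![0, 1, 0, 0, 0, 1] ∈ setA'r from ⟨rfl, rfl⟩)).2.2

theorem not_setA'c_subset_setA'r : ¬ setA'c p q ⊆ setA'r := fun h => by
  simpa using (h (show ![1, 0, 0, 0, 0, 0] ∈ setA'c p q by simp [setA'c])).1

end Components

theorem setA'_prod_setA'_irreducible_components_general (p q : ℕ) (hp : 0 < p) (hq : 0 < q) :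
    prodSet (setA' p q) (setA' p q) =
      prodSet setA'r setA'r ∪ prodSet setA'r (setA'c p q) ∪
        prodSet (setA'c p q) setA'r ∪ prodSet (setA'c p q) (setA'c p q) ∧
    (∀ i : Fin 4,
      (MvPolynomial.vanishingIdeal ℂ
        (![prodSet setA'r setA'r, prodSet setA'r (setA'c p q),
           prodSet (setA'c p q) setA'r, prodSet (setA'c p q) (setA'c p q)] i)).IsPrime) ∧
    (∀ i j : Fin 4, i ≠ j →
      ¬ (![prodSet setA'r setA'r, prodSet setA'r (setA'c p q),
           prodSet (setA'c p q) setA'r, prodSet (setA'c p q) (setA'c p q)] i) ⊆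
        (![prodSet setA'r setA'r, prodSet setA'r (setA'c p q),
           prodSet (setA'c p q) setA'r, prodSet (setA'c p q) (setA'c p q)] j)) := by
  have hp' : (p : ℂ) ≠ 0 := Nat.cast_ne_zero.mpr hp.ne'
  have hq' : (q : ℂ) ≠ 0 := Nat.cast_ne_zero.mpr hq.ne'
  refine ⟨?_, fun i => ?_, fun i j hij => ?_⟩
  · rw [setA'_eq_setA'r_union_setA'c hp' hq', prodSet_union_left, prodSet_union_right,
      prodSet_union_right, ← Set.union_assoc]
  · rw [setA'r_eq_polyImage, setA'c_eq_polyImage hp' hq']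
    fin_cases i <;> exact isPrime_vanishingIdeal_prodSet_polyImage _ _
  · fin_cases i <;> fin_cases j <;>
      simp [prodSet_subset_prodSet_iff, setA'r_nonempty, setA'c_nonempty,
        not_setA'r_subset_setA'c, not_setA'c_subset_setA'r] at hij ⊢

/-- For coprime positive integers `p` and `q`, the set `A' × A' ⊆ ℂ¹²` has exactly the four
irreducible components `A'_i × A'_j`, `i, j ∈ {r, c}`: it is their union, the vanishing ideal
(in 12 variables) of each is prime, and no one of them is contained in another. -/
theorem setA'_prod_setA'_irreducible_components (p q : ℕ) (hp : 0 < p) (hq : 0 < q)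
    (hpq : Nat.Coprime p q) :
    prodSet (setA' p q) (setA' p q) =
      prodSet setA'r setA'r ∪ prodSet setA'r (setA'c p q) ∪
        prodSet (setA'c p q) setA'r ∪ prodSet (setA'c p q) (setA'c p q) ∧
    (∀ i : Fin 4,
      (MvPolynomial.vanishingIdeal ℂ
        (![prodSet setA'r setA'r, prodSet setA'r (setA'c p q),
           prodSet (setA'c p q) setA'r, prodSet (setA'c p q) (setA'c p q)] i)).IsPrime) ∧
    (∀ i j : Fin 4, i ≠ j →
      ¬ (![prodSet setA'r setA'r, prodSet setA'r (setA'c p q),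
           prodSet (setA'c p q) setA'r, prodSet (setA'c p q) (setA'c p q)] i) ⊆
        (![prodSet setA'r setA'r, prodSet setA'r (setA'c p q),
           prodSet (setA'c p q) setA'r, prodSet (setA'c p q) (setA'c p q)] j)) :=
  setA'_prod_setA'_irreducible_components_general p q hp hq
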